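/- Let u, v be points of the Poincaré disk (‖u‖, ‖v‖ < 1) with u, v ≠ 0, and let α ∈ [0, π/2] be the angle between the vectors u and v, i.e., α = arccos(⟨u,v⟩/(‖u‖‖v‖)). Then the hyperbolic distance from v to the complete geodesic through the origin in direction u (a Euclidean diameter) equals arsinh(sinh(d(v,O)) · sin α) = arsinh((2‖v‖/(1−‖v‖²)) · sin α). -/

import Mathlib

/-- The inverse hyperbolic cosine on `[1, ∞)`. -/
noncomputable def arcosh (x : ℝ) : ℝ := Real.log (x + Real.sqrt (x ^ 2 - 1))

/-- Hyperbolic distance in the Poincaré ball model with curvature `-1`. -/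
noncomputable def pdist {n : ℕ} (x y : EuclideanSpace ℝ (Fin n)) : ℝ :=
  arcosh (1 + 2 * ‖x - y‖ ^ 2 / ((1 - ‖x‖ ^ 2) * (1 - ‖y‖ ^ 2)))

/-!
Put `r = ‖v‖`, `c = cos α` and let `s ∈ (-1, 1)` be the signed Euclidean position of a point on
the diameter. Then `cosh d = ((1 + s²)(1 + r²) - 4scr) / ((1 - r²)(1 - s²))`, and
`cosh² d - 1 = (2r / (1 - r²))² (1 - c²) + (2(cr(1 + s²) - s(1 + r²)) / ((1 - r²)(1 - s²)))²`.
The first summand is `sinh² (d(v, O)) sin² α`; the second vanishes at the foot of the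
perpendicular from `v`, a root of `cr(1 + s²) = s(1 + r²)` in `(-1, 1)` found by the
intermediate value theorem.
-/

open Real Set

lemma sinh_pdist {n : ℕ} {x y : EuclideanSpace ℝ (Fin n)} (hx : ‖x‖ < 1) (hy : ‖y‖ < 1) :
    sinh (pdist x y) =
      √((1 + 2 * ‖x - y‖ ^ 2 / ((1 - ‖x‖ ^ 2) * (1 - ‖y‖ ^ 2))) ^ 2 - 1) := by
  have hx2 : 0 < 1 - ‖x‖ ^ 2 := by nlinarith [norm_nonneg x]
  have hy2 : 0 < 1 - ‖y‖ ^ 2 := by nlinarith [norm_nonneg y]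
  exact sinh_arcosh (le_add_of_nonneg_right (by positivity))

lemma sinh_pdist_zero {n : ℕ} {v : EuclideanSpace ℝ (Fin n)} (hv : ‖v‖ < 1) :
    sinh (pdist v 0) = 2 * ‖v‖ / (1 - ‖v‖ ^ 2) := by
  have hv2 : 0 < 1 - ‖v‖ ^ 2 := by nlinarith [norm_nonneg v]
  have hsq : (1 + 2 * ‖v‖ ^ 2 / ((1 - ‖v‖ ^ 2) * (1 - 0 ^ 2))) ^ 2 - 1 =
      (2 * ‖v‖ / (1 - ‖v‖ ^ 2)) ^ 2 := by
    field_simp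
    ring
  rw [sinh_pdist hv (by simp), sub_zero, norm_zero, hsq, sqrt_sq (by positivity)]

/-- `cosh` of the hyperbolic distance from a point `v` with `‖v‖ = r` to the point at signed
Euclidean position `s` on a diameter making the angle `arccos c` with `v`. -/
noncomputable def coshDistDiameter (r c s : ℝ) : ℝ :=
  ((1 + s ^ 2) * (1 + r ^ 2) - 4 * s * c * r) / ((1 - r ^ 2) * (1 - s ^ 2))

lemma sinh_pdist_smul {n : ℕ} {u v : EuclideanSpace ℝ (Fin n)} (hv : ‖v‖ < 1) {t : ℝ}
    (ht : ‖t • u‖ < 1) :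
    sinh (pdist v (t • u)) =
      √(coshDistDiameter ‖v‖ (inner ℝ u v / (‖u‖ * ‖v‖)) (t * ‖u‖) ^ 2 - 1) := by
  have hnorm : ‖t • u‖ ^ 2 = (t * ‖u‖) ^ 2 := by
    rw [norm_smul, norm_eq_abs, mul_pow, sq_abs, mul_pow]
  set c := inner ℝ u v / (‖u‖ * ‖v‖)
  have hc : ‖u‖ * ‖v‖ * c = inner ℝ u v := mul_div_cancel_of_imp' fun h => by
    rcases mul_eq_zero.mp h with h | h <;> simp [norm_eq_zero.mp h]
  have hinner : inner ℝ v (t • u) = t * ‖u‖ * ‖v‖ * c := by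
    rw [real_inner_smul_right, real_inner_comm, ← hc]
    ring
  have hv2 : 1 - ‖v‖ ^ 2 ≠ 0 := by nlinarith [norm_nonneg v]
  have hs2 : 1 - (t * ‖u‖) ^ 2 ≠ 0 := by nlinarith [norm_nonneg (t • u)]
  rw [sinh_pdist hv ht, norm_sub_sq_real, hnorm, hinner, coshDistDiameter]
  congr 3
  generalize t * ‖u‖ = s at hs2 ⊢
  field_simp
  ring

lemma coshDistDiameter_sq_sub_one {r s : ℝ} (c : ℝ) (hr : 1 - r ^ 2 ≠ 0) (hs : 1 - s ^ 2 ≠ 0) :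
    coshDistDiameter r c s ^ 2 - 1 = (2 * r / (1 - r ^ 2)) ^ 2 * (1 - c ^ 2) +
      (2 * (c * r * (1 + s ^ 2) - s * (1 + r ^ 2)) / ((1 - r ^ 2) * (1 - s ^ 2))) ^ 2 := by
  rw [coshDistDiameter]
  field_simp
  ring

lemma exists_foot_perpendicular {r c : ℝ} (hr0 : 0 ≤ r) (hr1 : r < 1) (hc : |c| ≤ 1) :
    ∃ s ∈ Ioo (-1 : ℝ) 1, c * r * (1 + s ^ 2) - s * (1 + r ^ 2) = 0 := by
  obtain ⟨hc₁, hc₂⟩ := abs_le.mp hc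
  have hcont : ContinuousOn (fun s : ℝ => c * r * (1 + s ^ 2) - s * (1 + r ^ 2)) (Icc (-1) 1) :=
    by fun_prop
  exact intermediate_value_Ioo' (by norm_num) hcont ⟨by nlinarith, by nlinarith⟩

theorem isLeast_sqrt_coshDistDiameter {r c : ℝ} (hr0 : 0 ≤ r) (hr1 : r < 1) (hc : |c| ≤ 1) :
    IsLeast ((fun s => √(coshDistDiameter r c s ^ 2 - 1)) '' Ioo (-1) 1)
      (2 * r / (1 - r ^ 2) * √(1 - c ^ 2)) := by
  have hr : 1 - r ^ 2 ≠ 0 := by nlinarith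
  have hs {s : ℝ} (hsI : s ∈ Ioo (-1 : ℝ) 1) : 1 - s ^ 2 ≠ 0 := by nlinarith [hsI.1, hsI.2]
  have hk : 0 ≤ 2 * r / (1 - r ^ 2) := div_nonneg (by positivity) (by nlinarith)
  have hsqrt :
      2 * r / (1 - r ^ 2) * √(1 - c ^ 2) = √((2 * r / (1 - r ^ 2)) ^ 2 * (1 - c ^ 2)) := by
    rw [sqrt_mul (sq_nonneg _), sqrt_sq hk]
  constructor
  · obtain ⟨s, hsI, hfoot⟩ := exists_foot_perpendicular hr0 hr1 hc
    refine ⟨s, hsI, ?_⟩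
    beta_reduce
    rw [coshDistDiameter_sq_sub_one c hr (hs hsI), hfoot, hsqrt]
    simp
  · rintro _ ⟨s, hsI, rfl⟩
    beta_reduce
    rw [hsqrt, coshDistDiameter_sq_sub_one c hr (hs hsI)]
    exact sqrt_le_sqrt (le_add_of_nonneg_right (sq_nonneg _))

theorem dist_to_diameter_general {n : ℕ} (u v : EuclideanSpace ℝ (Fin n))
    (hu0 : u ≠ 0) (hv : ‖v‖ < 1) (α : ℝ)
    (hα : α = Real.arccos ((inner ℝ u v : ℝ) / (‖u‖ * ‖v‖))) :
    sInf {d : ℝ | ∃ t : ℝ, ‖t • u‖ < 1 ∧ d = pdist v (t • u)} =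
        Real.arsinh (Real.sinh (pdist v 0) * Real.sin α) ∧
      Real.arsinh (Real.sinh (pdist v 0) * Real.sin α) =
        Real.arsinh (2 * ‖v‖ / (1 - ‖v‖ ^ 2) * Real.sin α) := by
  have hnorm (t : ℝ) : ‖t • u‖ = |t * ‖u‖| := by rw [norm_smul, norm_eq_abs, abs_mul, abs_norm]
  have hS : {d : ℝ | ∃ t : ℝ, ‖t • u‖ < 1 ∧ d = pdist v (t • u)} = arsinh ''
      ((fun s => √(coshDistDiameter ‖v‖ (inner ℝ u v / (‖u‖ * ‖v‖)) s ^ 2 - 1)) '' Ioo (-1) 1) := by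
    ext d
    constructor
    · rintro ⟨t, ht, rfl⟩
      refine ⟨_, ⟨t * ‖u‖, abs_lt.mp (hnorm t ▸ ht), rfl⟩, ?_⟩
      beta_reduce
      rw [← sinh_pdist_smul hv ht, arsinh_sinh]
    · rintro ⟨_, ⟨s, hs, rfl⟩, rfl⟩
      have hu : ‖u‖ ≠ 0 := norm_ne_zero_iff.mpr hu0
      have ht : ‖(s / ‖u‖) • u‖ < 1 := by
        rw [hnorm, div_mul_cancel₀ s hu]
        exact abs_lt.mpr hs
      refine ⟨s / ‖u‖, ht, ?_⟩
      rw [← arsinh_sinh (pdist v _), sinh_pdist_smul hv ht, div_mul_cancel₀ s hu]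
  rw [sinh_pdist_zero hv, hα, sin_arccos, hS]
  exact ⟨(arsinh_strictMono.monotone.map_isLeast (isLeast_sqrt_coshDistDiameter (norm_nonneg v)
    hv (abs_real_inner_div_norm_mul_norm_le_one u v))).csInf_eq, rfl⟩

/-- In the Poincaré disk, the distance from `v` to the diameter through the origin in
direction `u` is `arsinh (sinh (d(v,O)) · sin α) = arsinh ((2‖v‖/(1−‖v‖²)) · sin α)`,
where `α` is the angle between `u` and `v`. -/
theorem dist_to_diameter {n : ℕ} (u v : EuclideanSpace ℝ (Fin n))
    (hu0 : u ≠ 0) (hv0 : v ≠ 0) (hu : ‖u‖ < 1) (hv : ‖v‖ < 1) (α : ℝ)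
    (hα : α = Real.arccos ((inner ℝ u v : ℝ) / (‖u‖ * ‖v‖)))
    (hα2 : α ≤ Real.pi / 2) :
    sInf {d : ℝ | ∃ t : ℝ, ‖t • u‖ < 1 ∧ d = pdist v (t • u)} =
        Real.arsinh (Real.sinh (pdist v 0) * Real.sin α) ∧
      Real.arsinh (Real.sinh (pdist v 0) * Real.sin α) =
        Real.arsinh (2 * ‖v‖ / (1 - ‖v‖ ^ 2) * Real.sin α) :=
  dist_to_diameter_general u v hu0 hv α hα
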